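/- Let n ≥ 1, let 1 ≤ ℓ ≤ n+1, and let D be a symmetric chain decomposition of Q_{2n+1}. Then the middle 2ℓ levels graph of Q_{2n+1} has a perfect matching each of whose edges lies on a chain of D. -/

import Mathlib

/-- The Hamming weight of a bitstring of length `n`, i.e., its number of 1-bits. -/
def wt {n : ℕ} (x : Fin n → Bool) : ℕ := (Finset.univ.filter fun i => x i = true).card

/-- The `n`-dimensional hypercube: vertices are bitstrings of length `n`, two of which are
adjacent iff they differ in exactly one position. -/
def cube (n : ℕ) : SimpleGraph (Fin n → Bool) where
  Adj x y := hammingDist x y = 1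
  symm := by constructor; intro x y h; show hammingDist y x = 1; rw [hammingDist_comm]; exact h
  loopless := by constructor; intro x h; have h' : hammingDist x x = 1 := h; simp [hammingDist_self] at h'
/-- A symmetric chain in the `n`-cube: a path `(x_k, x_{k+1}, …, x_{n−k})` in `cube n`
where `x_i` has Hamming weight `i` for each `k ≤ i ≤ n − k`. -/
def IsSymChain (n : ℕ) (c : List (Fin n → Bool)) : Prop :=
  c ≠ [] ∧ c.Chain' (cube n).Adj ∧
  ∃ k : ℕ, (∀ (i : ℕ) (h : i < c.length), wt (c.get ⟨i, h⟩) = k + i) ∧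
    2 * k + (c.length - 1) = n

/-- A symmetric chain decomposition of the `n`-cube: a collection of symmetric chains
whose vertex sets partition the vertex set. -/
def IsSCD (n : ℕ) (D : Set (List (Fin n → Bool))) : Prop :=
  (∀ c ∈ D, IsSymChain n c) ∧ ∀ x : Fin n → Bool, ∃! c, c ∈ D ∧ x ∈ c

/-- The edges lying on a chain, i.e., the unordered pairs of consecutive entries. -/
def chainEdges {V : Type*} (c : List V) : Set (Sym2 V) :=
  {e | ∃ (i : ℕ) (h : i + 1 < c.length),
    e = s(c.get ⟨i, Nat.lt_of_succ_lt h⟩, c.get ⟨i + 1, h⟩)}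

/-- All edges lying on some chain of the collection `D`. -/
def scdEdges {n : ℕ} (D : Set (List (Fin n → Bool))) : Set (Sym2 (Fin n → Bool)) :=
  ⋃ c ∈ D, chainEdges c

/-- Two chain decompositions are edge-disjoint if no edge lies on a chain of one
and also on a chain of the other. -/
def EdgeDisjointSCD {n : ℕ} (D D' : Set (List (Fin n → Bool))) : Prop :=
  Disjoint (scdEdges D) (scdEdges D')
/-- The vertex set of the middle `2ℓ` levels of the `(2n+1)`-cube: bitstrings with
Hamming weight in the interval `[n+1−ℓ, n+ℓ]`. -/
def middleSet (n l : ℕ) : Set (Fin (2 * n + 1) → Bool) :=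
  {x | n + 1 - l ≤ wt x ∧ wt x ≤ n + l}

/-- The middle `2ℓ` levels graph: the subgraph of the `(2n+1)`-cube induced by the vertices
with Hamming weight in `[n+1−ℓ, n+ℓ]`. -/
def middleGraph (n l : ℕ) : SimpleGraph (middleSet n l) :=
  (cube (2 * n + 1)).induce (middleSet n l)

/-- `H` is a cycle factor of `G`: a spanning subgraph in which every vertex has degree 2. -/
def IsCycleFactor {V : Type*} (G H : SimpleGraph V) : Prop :=
  H ≤ G ∧ ∀ v, (H.neighborSet v).ncard = 2

/-- `H` is a perfect matching of `G`: a spanning subgraph in which every vertex has degree 1. -/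
def IsPerfectMatchingOf {V : Type*} (G H : SimpleGraph V) : Prop :=
  H ≤ G ∧ ∀ v, (H.neighborSet v).ncard = 1

/-!
A chain of weights `k, …, 2n+1-k` meets the window of weights `[a, 2n+1-a]` in the consecutive
weights `b, …, 2n+1-b` with `b = max k a`, an even number of them because chain and window are
both symmetric about `n + 1/2`. Pairing these vertices two by two from weight `b` upwards is a
fixed-point-free involution of the window along chain edges, i.e. a perfect matching.
-/

def mate (b w : ℕ) : ℕ := if (w - b) % 2 = 0 then w + 1 else w - 1

lemma mate_mate {b w : ℕ} (hw : b ≤ w) : mate b (mate b w) = w := by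
  unfold mate; split_ifs <;> omega

lemma mate_eq_succ_or_succ_eq (b w : ℕ) : mate b w = w + 1 ∨ mate b w + 1 = w := by
  unfold mate; split_ifs <;> omega

lemma le_mate {b w : ℕ} (hw : b ≤ w) : b ≤ mate b w := by
  unfold mate; split_ifs <;> omega

lemma mate_add_le {n b w : ℕ} (hb : b ≤ w) (hw : w + b ≤ 2 * n + 1) :
    mate b w + b ≤ 2 * n + 1 := by
  unfold mate; split_ifs <;> omega

lemma wt_le {m : ℕ} (x : Fin m → Bool) : wt x ≤ m :=
  (Finset.card_filter_le _ _).trans_eq (Finset.card_fin m)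

lemma mem_middleSet_iff {n l : ℕ} {x : Fin (2 * n + 1) → Bool} :
    x ∈ middleSet n l ↔ n + 1 - l ≤ wt x ∧ wt x + (n + 1 - l) ≤ 2 * n + 1 := by
  have := wt_le x
  change _ ∧ _ ↔ _
  omega

lemma adj_of_mem_chainEdges {V : Type*} {G : SimpleGraph V} {ch : List V} {x y : V}
    (hc : ch.IsChain G.Adj) (h : s(x, y) ∈ chainEdges ch) : G.Adj x y := by
  obtain ⟨i, hi, he⟩ := h
  have hadj := List.isChain_iff_getElem.mp hc i hi
  rcases Sym2.eq_iff.mp he with ⟨rfl, rfl⟩ | ⟨rfl, rfl⟩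
  · exact hadj
  · exact hadj.symm

section SymChain

variable {m : ℕ} {ch : List (Fin m → Bool)}

def minWt (ch : List (Fin m → Bool)) : ℕ := wt (ch.headD fun _ => false)

namespace IsSymChain

lemma wt_getElem_and_length (hc : IsSymChain m ch) :
    (∀ (i : ℕ) (hi : i < ch.length), wt ch[i] = minWt ch + i) ∧
      2 * minWt ch + (ch.length - 1) = m := by
  obtain ⟨hne, -, k, hk, hlen⟩ := hc
  obtain ⟨y, t, rfl⟩ := List.exists_cons_of_ne_nil hne
  have hy : minWt (y :: t) = k := hk 0 (by simp)
  rw [hy]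
  exact ⟨fun i hi => hk i hi, hlen⟩

lemma wt_getElem (hc : IsSymChain m ch) (i : ℕ) (hi : i < ch.length) :
    wt ch[i] = minWt ch + i :=
  hc.wt_getElem_and_length.1 i hi

lemma minWt_le_wt (hc : IsSymChain m ch) {x : Fin m → Bool} (hx : x ∈ ch) :
    minWt ch ≤ wt x ∧ wt x + minWt ch ≤ m := by
  obtain ⟨i, hi, rfl⟩ := List.mem_iff_getElem.mp hx
  have := hc.wt_getElem_and_length.2
  rw [hc.wt_getElem i hi]
  omega

lemma eq_of_wt_eq (hc : IsSymChain m ch) {x y : Fin m → Bool} (hx : x ∈ ch) (hy : y ∈ ch)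
    (h : wt x = wt y) : x = y := by
  obtain ⟨i, hi, rfl⟩ := List.mem_iff_getElem.mp hx
  obtain ⟨j, hj, rfl⟩ := List.mem_iff_getElem.mp hy
  rw [hc.wt_getElem i hi, hc.wt_getElem j hj] at h
  obtain rfl : i = j := by omega
  rfl

lemma getD_mem_and_wt (hc : IsSymChain m ch) {w : ℕ} (d : Fin m → Bool)
    (hw : minWt ch ≤ w) (hw' : w + minWt ch ≤ m) :
    ch.getD (w - minWt ch) d ∈ ch ∧ wt (ch.getD (w - minWt ch) d) = w := by
  have hlen := hc.wt_getElem_and_length.2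
  have hpos : 0 < ch.length := List.length_pos_iff.mpr hc.1
  have hi : w - minWt ch < ch.length := by omega
  rw [List.getD_eq_getElem ch d hi, hc.wt_getElem _ hi]
  exact ⟨List.getElem_mem hi, by omega⟩

lemma mem_chainEdges_of_wt_succ (hc : IsSymChain m ch) {x y : Fin m → Bool}
    (hx : x ∈ ch) (hy : y ∈ ch) (h : wt y = wt x + 1) : s(x, y) ∈ chainEdges ch := by
  obtain ⟨i, hi, rfl⟩ := List.mem_iff_getElem.mp hx
  obtain ⟨j, hj, rfl⟩ := List.mem_iff_getElem.mp hy
  rw [hc.wt_getElem i hi, hc.wt_getElem j hj] at h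
  obtain rfl : j = i + 1 := by omega
  exact ⟨i, hj, rfl⟩

end IsSymChain

end SymChain

section ChainMate

variable {n a : ℕ} {ch : List (Fin (2 * n + 1) → Bool)} {x : Fin (2 * n + 1) → Bool}

/-- The partner of `x` on the chain `ch` in the window of weights `[a, 2n+1-a]`. -/
def chainMate (a : ℕ) (ch : List (Fin (2 * n + 1) → Bool)) (x : Fin (2 * n + 1) → Bool) :
    Fin (2 * n + 1) → Bool :=
  ch.getD (mate (max (minWt ch) a) (wt x) - minWt ch) x

namespace IsSymChain

variable (hc : IsSymChain (2 * n + 1) ch) (hx : x ∈ ch) (ha : a ≤ wt x)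
  (ha' : wt x + a ≤ 2 * n + 1)
include hc hx ha ha'

lemma max_minWt_le_wt : max (minWt ch) a ≤ wt x ∧ wt x + max (minWt ch) a ≤ 2 * n + 1 := by
  have := hc.minWt_le_wt hx
  omega

lemma chainMate_mem_and_wt :
    chainMate a ch x ∈ ch ∧ wt (chainMate a ch x) = mate (max (minWt ch) a) (wt x) := by
  obtain ⟨hb, hb'⟩ := max_minWt_le_wt hc hx ha ha'
  have := le_mate hb
  have := mate_add_le hb hb'
  exact hc.getD_mem_and_wt x (by omega) (by omega)

lemma chainMate_window : a ≤ wt (chainMate a ch x) ∧ wt (chainMate a ch x) + a ≤ 2 * n + 1 := by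
  obtain ⟨hb, hb'⟩ := max_minWt_le_wt hc hx ha ha'
  have := le_mate hb
  have := mate_add_le hb hb'
  rw [(chainMate_mem_and_wt hc hx ha ha').2]
  omega

lemma chainMate_chainMate : chainMate a ch (chainMate a ch x) = x := by
  obtain ⟨hy, hwy⟩ := chainMate_mem_and_wt hc hx ha ha'
  obtain ⟨hya, hya'⟩ := chainMate_window hc hx ha ha'
  obtain ⟨hz, hwz⟩ := chainMate_mem_and_wt hc hy hya hya'
  refine hc.eq_of_wt_eq hz hx ?_
  rw [hwz, hwy, mate_mate (max_minWt_le_wt hc hx ha ha').1]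

lemma chainMate_mem_chainEdges : s(x, chainMate a ch x) ∈ chainEdges ch := by
  obtain ⟨hy, hwy⟩ := chainMate_mem_and_wt hc hx ha ha'
  rcases mate_eq_succ_or_succ_eq (max (minWt ch) a) (wt x) with h | h
  · exact hc.mem_chainEdges_of_wt_succ hx hy (hwy.trans h)
  · rw [Sym2.eq_swap]
    exact hc.mem_chainEdges_of_wt_succ hy hx (hwy ▸ h.symm)

end IsSymChain

end ChainMate

namespace IsSCD

section

variable {m : ℕ} {D : Set (List (Fin m → Bool))} (hD : IsSCD m D)

noncomputable def chainOf (x : Fin m → Bool) : List (Fin m → Bool) := (hD.2 x).exists.choose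

lemma chainOf_mem (x : Fin m → Bool) : hD.chainOf x ∈ D := (hD.2 x).exists.choose_spec.1

lemma mem_chainOf (x : Fin m → Bool) : x ∈ hD.chainOf x := (hD.2 x).exists.choose_spec.2

lemma chainOf_eq {x : Fin m → Bool} {ch : List (Fin m → Bool)} (hch : ch ∈ D) (hx : x ∈ ch) :
    hD.chainOf x = ch :=
  (hD.2 x).unique ⟨hD.chainOf_mem x, hD.mem_chainOf x⟩ ⟨hch, hx⟩

lemma isSymChain_chainOf (x : Fin m → Bool) : IsSymChain m (hD.chainOf x) :=
  hD.1 _ (hD.chainOf_mem x)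

end

variable {n a : ℕ} {D : Set (List (Fin (2 * n + 1) → Bool))} (hD : IsSCD (2 * n + 1) D)

noncomputable def partner (a : ℕ) (x : Fin (2 * n + 1) → Bool) : Fin (2 * n + 1) → Bool :=
  chainMate a (hD.chainOf x) x

variable {x : Fin (2 * n + 1) → Bool} (ha : a ≤ wt x) (ha' : wt x + a ≤ 2 * n + 1)
include ha ha'

lemma partner_window : a ≤ wt (hD.partner a x) ∧ wt (hD.partner a x) + a ≤ 2 * n + 1 :=
  (hD.isSymChain_chainOf x).chainMate_window (hD.mem_chainOf x) ha ha'

lemma partner_partner : hD.partner a (hD.partner a x) = x := by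
  have hc := hD.isSymChain_chainOf x
  have hx := hD.mem_chainOf x
  have hchain : hD.chainOf (hD.partner a x) = hD.chainOf x :=
    hD.chainOf_eq (hD.chainOf_mem x) (hc.chainMate_mem_and_wt hx ha ha').1
  rw [partner, hchain]
  exact hc.chainMate_chainMate hx ha ha'

lemma partner_mem_chainEdges : s(x, hD.partner a x) ∈ chainEdges (hD.chainOf x) :=
  (hD.isSymChain_chainOf x).chainMate_mem_chainEdges (hD.mem_chainOf x) ha ha'

lemma partner_mem_scdEdges : s(x, hD.partner a x) ∈ scdEdges D :=
  Set.mem_iUnion₂.mpr ⟨_, hD.chainOf_mem x, hD.partner_mem_chainEdges ha ha'⟩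

lemma cube_adj_partner : (cube (2 * n + 1)).Adj x (hD.partner a x) :=
  adj_of_mem_chainEdges (hD.isSymChain_chainOf x).2.1 (hD.partner_mem_chainEdges ha ha')

end IsSCD

namespace SimpleGraph

variable {V : Type*} {f : V → V}

lemma eq_of_fromRel_adj_of_involutive (hf : Function.Involutive f) {u w : V}
    (h : (fromRel fun u w => f u = w).Adj u w) : f u = w := by
  obtain ⟨-, h | rfl⟩ := h
  exacts [h, hf w]

lemma isPerfectMatchingOf_fromRel_of_involutive {G : SimpleGraph V} (hf : Function.Involutive f)
    (hG : ∀ v, G.Adj v (f v)) : IsPerfectMatchingOf G (fromRel fun u w => f u = w) := by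
  refine ⟨fun u w huw => eq_of_fromRel_adj_of_involutive hf huw ▸ hG u, fun v => ?_⟩
  have hv : (fromRel fun u w => f u = w).neighborSet v = {f v} := by
    ext w
    refine ⟨fun h => (eq_of_fromRel_adj_of_involutive hf h).symm, ?_⟩
    rintro rfl
    exact ⟨(hG v).ne, Or.inl rfl⟩
  rw [hv, Set.ncard_singleton]

end SimpleGraph

theorem scd_gives_perfect_matching_general (n : ℕ)
    (D : Set (List (Fin (2 * n + 1) → Bool))) (hD : IsSCD (2 * n + 1) D)
    (l : ℕ) :
    ∃ M : SimpleGraph (middleSet n l),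
      IsPerfectMatchingOf (middleGraph n l) M ∧
      ∀ u v : middleSet n l, M.Adj u v → s(u.val, v.val) ∈ scdEdges D := by
  have hmaps : Set.MapsTo (hD.partner (n + 1 - l)) (middleSet n l) (middleSet n l) :=
    fun x hx => by
      rw [mem_middleSet_iff] at hx ⊢
      exact hD.partner_window hx.1 hx.2
  set f := hmaps.restrict
  have hf : Function.Involutive f := fun x => by
    have hx := mem_middleSet_iff.mp x.2
    exact Subtype.ext (hD.partner_partner hx.1 hx.2)
  refine ⟨SimpleGraph.fromRel fun u v => f u = v,
    SimpleGraph.isPerfectMatchingOf_fromRel_of_involutive hf fun x => ?_, fun u v huv => ?_⟩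
  · have hx := mem_middleSet_iff.mp x.2
    exact SimpleGraph.induce_adj.mpr (hD.cube_adj_partner hx.1 hx.2)
  · obtain rfl := SimpleGraph.eq_of_fromRel_adj_of_involutive hf huv
    have hu := mem_middleSet_iff.mp u.2
    exact hD.partner_mem_scdEdges hu.1 hu.2

/-- Given a symmetric chain decomposition `D` of the `(2n+1)`-cube and `1 ≤ ℓ ≤ n+1`, the
middle `2ℓ` levels graph has a perfect matching each of whose edges lies on a chain of `D`. -/
theorem scd_gives_perfect_matching (n : ℕ) (hn : 1 ≤ n)
    (D : Set (List (Fin (2 * n + 1) → Bool))) (hD : IsSCD (2 * n + 1) D)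
    (l : ℕ) (hl1 : 1 ≤ l) (hl2 : l ≤ n + 1) :
    ∃ M : SimpleGraph (middleSet n l),
      IsPerfectMatchingOf (middleGraph n l) M ∧
      ∀ u v : middleSet n l, M.Adj u v → s(u.val, v.val) ∈ scdEdges D :=
  scd_gives_perfect_matching_general n D hD l
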